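/- arXiv:2504.08987 — 6 statements merged into one kernel-verified Lean document; each statement's English description precedes it below -/
import Mathlib

section
/- Let f : {0,1}^n → {0,1} with F := f⁻¹(1) nonempty and N := |F|. Define g_f(a) = 1 if Pr_{x ∼ Uniform(F)}[f(a ⊕ x) = 1] ≥ 1/2 and g_f(a) = 0 otherwise. Suppose |f⁻¹(1) △ g_f⁻¹(1)| ≥ (ε/10)·N. Then Pr_{x,y ∼ Uniform(F), independent}[f(x ⊕ y) = 0] ≥ ε/40. -/
/-- The set of satisfying assignments of a Boolean function. -/
def ones {σ : Type*} [Fintype σ] [DecidableEq σ] (f : σ → Bool) : Finset σ :=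
  Finset.univ.filter (fun x => f x = true)

/-- Relative distance: |f⁻¹(1) △ g⁻¹(1)| / |f⁻¹(1)|. -/
noncomputable def relDist {σ : Type*} [Fintype σ] [DecidableEq σ] (f g : σ → Bool) : ℝ :=
  ((symmDiff (ones f) (ones g)).card : ℝ) / ((ones f).card : ℝ)

theorem phase1_reject_prob (n : ℕ) (f gf : (Fin n → Bool) → Bool) (ε : ℝ)
    (hf : (ones f).Nonempty)
    (hgf : ∀ a : Fin n → Bool, gf a = true ↔
      ((((ones f).filter (fun x => f (fun i => xor (a i) (x i)) = true)).card : ℝ) ≥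
        ((ones f).card : ℝ) / 2))
    (hfar : ((symmDiff (ones f) (ones gf)).card : ℝ) ≥ ε / 10 * ((ones f).card : ℝ)) :
    ((((ones f) ×ˢ (ones f)).filter
        (fun p => f (fun i => xor (p.1 i) (p.2 i)) = false)).card : ℝ) ≥
      ε / 40 * (((ones f).card : ℝ)) ^ 2 := by
  classical
  by_cases hε : ε ≤ 0
  · have h1 : ε / 40 * (((ones f).card : ℝ)) ^ 2 ≤ 0 :=
      mul_nonpos_of_nonpos_of_nonneg (by linarith) (by positivity)
    exact le_trans h1 (Nat.cast_nonneg _)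
  push_neg at hε
  set F := ones f with hF
  set G := ones gf with hG
  set N : ℝ := (F.card : ℝ) with hNdef
  have hN0 : (0:ℝ) < N := by
    rw [hNdef]
    exact_mod_cast Finset.card_pos.mpr hf
  set Bad := (F ×ˢ F).filter (fun p => f (fun i => xor (p.1 i) (p.2 i)) = false) with hBad
  have hmemF : ∀ a, a ∈ F ↔ f a = true := by intro a; simp [hF, ones]
  have hmemG : ∀ a, a ∈ G ↔ gf a = true := by intro a; simp [hG, ones]
  -- per-point counts
  have hcount : ∀ a : Fin n → Bool,
      ((F.filter (fun y => f (fun i => xor (a i) (y i)) = true)).card : ℕ)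
      + ((F.filter (fun y => f (fun i => xor (a i) (y i)) = false)).card : ℕ) = F.card := by
    intro a
    have := Finset.card_filter_add_card_filter_not
      (s := F) (p := fun y => f (fun i => xor (a i) (y i)) = true)
    simpa [Bool.not_eq_true] using this
  -- Case 1 bound
  have hbound1 : (((F \ G).card : ℝ)) * (N / 2) ≤ (Bad.card : ℝ) := by
    set T1 : Finset ((Fin n → Bool) × (Fin n → Bool)) :=
      (F \ G).biUnion (fun a =>
        (F.filter (fun y => f (fun i => xor (a i) (y i)) = false)).image (fun y => (a, y)))
      with hT1
    have hT1sub : T1 ⊆ Bad := by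
      intro p hp
      simp only [hT1, Finset.mem_biUnion, Finset.mem_image, Finset.mem_filter,
        Finset.mem_sdiff] at hp
      obtain ⟨a, ⟨haF, _⟩, y, ⟨hyF, hy0⟩, rfl⟩ := hp
      simp only [hBad, Finset.mem_filter, Finset.mem_product]
      exact ⟨⟨haF, hyF⟩, hy0⟩
    have hT1card : (T1.card : ℝ) =
        ∑ a ∈ F \ G, ((F.filter (fun y => f (fun i => xor (a i) (y i)) = false)).card : ℝ) := by
      rw [hT1, Finset.card_biUnion]
      · push_cast
        refine Finset.sum_congr rfl (fun a _ => ?_)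
        rw [Finset.card_image_of_injective _ (fun y1 y2 h => congrArg Prod.snd h)]
      · intro a _ b _ hab
        simp only [Finset.disjoint_left, Finset.mem_image]
        rintro p ⟨y, _, rfl⟩ ⟨y', _, h⟩
        exact hab (congrArg Prod.fst h).symm
    have hper : ∀ a ∈ F \ G,
        (N / 2 : ℝ) ≤ ((F.filter (fun y => f (fun i => xor (a i) (y i)) = false)).card : ℝ) := by
      intro a ha
      rw [Finset.mem_sdiff, hmemG] at ha
      have hlt : ¬ (((F.filter (fun x => f (fun i => xor (a i) (x i)) = true)).card : ℝ) ≥ N / 2) := by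
        intro hc
        exact ha.2 ((hgf a).mpr hc)
      push_neg at hlt
      have := hcount a
      have hcast : ((F.filter (fun y => f (fun i => xor (a i) (y i)) = true)).card : ℝ)
          + ((F.filter (fun y => f (fun i => xor (a i) (y i)) = false)).card : ℝ) = N := by
        rw [hNdef]; exact_mod_cast this
      linarith
    calc (((F \ G).card : ℝ)) * (N / 2)
        = ∑ _a ∈ F \ G, (N / 2 : ℝ) := by rw [Finset.sum_const, nsmul_eq_mul]
      _ ≤ ∑ a ∈ F \ G, ((F.filter (fun y => f (fun i => xor (a i) (y i)) = false)).card : ℝ) :=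
          Finset.sum_le_sum hper
      _ = (T1.card : ℝ) := hT1card.symm
      _ ≤ (Bad.card : ℝ) := by exact_mod_cast Finset.card_le_card hT1sub
  -- Case 2 bound
  have hbound2 : (((G \ F).card : ℝ)) * (N / 2) ≤ (Bad.card : ℝ) := by
    set T2 : Finset ((Fin n → Bool) × (Fin n → Bool)) :=
      (G \ F).biUnion (fun a =>
        (F.filter (fun x => f (fun i => xor (a i) (x i)) = true)).image
          (fun x => (x, fun i => xor (a i) (x i))))
      with hT2
    have hxa : ∀ (a x : Fin n → Bool), (fun i => xor (x i) (xor (a i) (x i))) = a := by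
      intro a x
      funext i
      cases x i <;> cases a i <;> rfl
    have hT2sub : T2 ⊆ Bad := by
      intro p hp
      simp only [hT2, Finset.mem_biUnion, Finset.mem_image, Finset.mem_filter,
        Finset.mem_sdiff] at hp
      obtain ⟨a, ⟨haG, haF⟩, x, ⟨hxF, hx1⟩, rfl⟩ := hp
      simp only [hBad, Finset.mem_filter, Finset.mem_product]
      refine ⟨⟨hxF, (hmemF _).mpr hx1⟩, ?_⟩
      rw [hxa a x]
      rw [hmemF] at haF
      exact Bool.not_eq_true _ |>.mp haF
    have hT2card : (T2.card : ℝ) =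
        ∑ a ∈ G \ F, ((F.filter (fun x => f (fun i => xor (a i) (x i)) = true)).card : ℝ) := by
      rw [hT2, Finset.card_biUnion]
      · push_cast
        refine Finset.sum_congr rfl (fun a _ => ?_)
        rw [Finset.card_image_of_injective _ (fun x1 x2 h => congrArg Prod.fst h)]
      · intro a _ b _ hab
        simp only [Finset.disjoint_left, Finset.mem_image]
        rintro p ⟨x, _, rfl⟩ ⟨x', _, h⟩
        apply hab
        have hx : x' = x := congrArg Prod.fst h
        subst hx
        have h2 : (fun i => xor (b i) (x' i)) = (fun i => xor (a i) (x' i)) :=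
          congrArg Prod.snd h
        funext i
        have := congrFun h2 i
        cases hxi : x' i <;> cases hai : a i <;> cases hbi : b i <;>
          simp_all
    have hper : ∀ a ∈ G \ F,
        (N / 2 : ℝ) ≤ ((F.filter (fun x => f (fun i => xor (a i) (x i)) = true)).card : ℝ) := by
      intro a ha
      rw [Finset.mem_sdiff, hmemG] at ha
      exact (hgf a).mp ha.1
    calc (((G \ F).card : ℝ)) * (N / 2)
        = ∑ _a ∈ G \ F, (N / 2 : ℝ) := by rw [Finset.sum_const, nsmul_eq_mul]
      _ ≤ ∑ a ∈ G \ F, ((F.filter (fun x => f (fun i => xor (a i) (x i)) = true)).card : ℝ) :=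
          Finset.sum_le_sum hper
      _ = (T2.card : ℝ) := hT2card.symm
      _ ≤ (Bad.card : ℝ) := by exact_mod_cast Finset.card_le_card hT2sub
  -- symmetric difference split
  have hsym : (((F \ G).card : ℝ)) + (((G \ F).card : ℝ)) ≥ ε / 10 * N := by
    have hunion : symmDiff F G = (F \ G) ∪ (G \ F) := by
      rw [symmDiff_def, Finset.sup_eq_union]
    have hcard : (symmDiff F G).card = (F \ G).card + (G \ F).card := by
      rw [hunion, Finset.card_union_of_disjoint (disjoint_sdiff_sdiff)]
    have := hfar
    rw [hcard] at this
    push_cast at this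
    linarith
  -- combine
  rcases le_or_gt (ε / 20 * N) (((F \ G).card : ℝ)) with h | h
  · have h2 : ε / 20 * N * (N / 2) ≤ (((F \ G).card : ℝ)) * (N / 2) :=
      mul_le_mul_of_nonneg_right h (by positivity)
    have h3 : ε / 40 * N ^ 2 = ε / 20 * N * (N / 2) := by ring
    linarith
  · have h1 : ε / 20 * N ≤ (((G \ F).card : ℝ)) := by linarith
    have h2 : ε / 20 * N * (N / 2) ≤ (((G \ F).card : ℝ)) * (N / 2) :=
      mul_le_mul_of_nonneg_right h1 (by positivity)
    have h3 : ε / 40 * N ^ 2 = ε / 20 * N * (N / 2) := by ring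
    linarith
end

section
/- Let f : {0,1}^n → {0,1} with F = f⁻¹(1) nonempty, N = |F|, and 0 < δ. For a ∈ {0,1}^n define W(a) := {x ∈ F : f(a ⊕ x) ≠ f(a)}, and let H := {a ∈ {0,1}^n : |W(a)| > δN}. If |H| ≥ δN, then Pr_{x,y ∼ Uniform(F), independent}[f(x ⊕ y) = 0] ≥ δ²/2. -/
private def bvxor {n : ℕ} (a x : Fin n → Bool) : Fin n → Bool := fun i => xor (a i) (x i)

private lemma bvxor_cancel {n : ℕ} (a x : Fin n → Bool) : bvxor (bvxor a x) x = a := by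
  funext i; simp [bvxor, Bool.xor_assoc]

theorem large_H_reject_prob (n : ℕ) (f : (Fin n → Bool) → Bool) (δ : ℝ) (hδ : 0 < δ)
    (hf : (ones f).Nonempty)
    (hH : ((Finset.univ.filter (fun a : Fin n → Bool =>
        (((ones f).filter (fun x => f (fun i => xor (a i) (x i)) ≠ f a)).card : ℝ) >
          δ * ((ones f).card : ℝ))).card : ℝ) ≥ δ * ((ones f).card : ℝ)) :
    ((((ones f) ×ˢ (ones f)).filter
        (fun p => f (fun i => xor (p.1 i) (p.2 i)) = false)).card : ℝ) ≥
      δ ^ 2 / 2 * (((ones f).card : ℝ)) ^ 2 := by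
  classical
  set F := ones f with hFdef
  set H := Finset.univ.filter (fun a : Fin n → Bool =>
        ((F.filter (fun x => f (fun i => xor (a i) (x i)) ≠ f a)).card : ℝ) >
          δ * (F.card : ℝ)) with hHdef
  set B := ((F ×ˢ F).filter (fun p => f (fun i => xor (p.1 i) (p.2 i)) = false)) with hBdef
  set S := (H ×ˢ F).filter (fun p : (Fin n → Bool) × (Fin n → Bool) =>
      f (bvxor p.1 p.2) ≠ f p.1) with hSdef
  set N : ℝ := (F.card : ℝ) with hNdef
  -- lower bound on S.card
  have hfiber1 : ∀ a ∈ H, (S.filter (fun p => p.1 = a)).card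
      = (F.filter (fun x => f (bvxor a x) ≠ f a)).card := by
    intro a ha
    apply Finset.card_bij (fun p _ => p.2)
    · intro p hp
      simp only [Finset.mem_filter, Finset.mem_product, hSdef] at hp ⊢
      obtain ⟨⟨⟨_, h2⟩, h3⟩, h4⟩ := hp
      exact ⟨h2, h4 ▸ h3⟩
    · intro p hp q hq h
      simp only [Finset.mem_filter, hSdef] at hp hq
      exact Prod.ext (hp.2.trans hq.2.symm) h
    · intro x hx
      simp only [Finset.mem_filter] at hx
      exact ⟨(a, x), by simp [hSdef, ha, hx.1, hx.2], rfl⟩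
  have hScard : (S.card : ℝ) ≥ (δ * N) * (δ * N) := by
    have h1 : S.card = ∑ a ∈ H, (F.filter (fun x => f (bvxor a x) ≠ f a)).card := by
      rw [Finset.card_eq_sum_card_fiberwise (f := Prod.fst) (t := H)]
      · exact Finset.sum_congr rfl hfiber1
      · intro p hp
        simp only [hSdef, Finset.mem_coe, Finset.mem_filter, Finset.mem_product] at hp
        exact hp.1.1
    have h2 : ∀ a ∈ H, ((F.filter (fun x => f (bvxor a x) ≠ f a)).card : ℝ) ≥ δ * N := by
      intro a ha
      simp only [hHdef, Finset.mem_filter] at ha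
      have := ha.2
      exact le_of_lt (by exact_mod_cast this)
    calc (S.card : ℝ) = ∑ a ∈ H, ((F.filter (fun x => f (bvxor a x) ≠ f a)).card : ℝ) := by
          rw [h1]; push_cast; ring
      _ ≥ ∑ _a ∈ H, δ * N := Finset.sum_le_sum h2
      _ = (H.card : ℝ) * (δ * N) := by rw [Finset.sum_const]; ring
      _ ≥ (δ * N) * (δ * N) := by
          apply mul_le_mul_of_nonneg_right hH
          positivity
  -- map S into B with fibers of size ≤ 2
  have hg : S.card ≤ 2 * B.card := by
    apply Finset.card_le_mul_card_image_of_maps_to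
      (f := fun p : (Fin n → Bool) × (Fin n → Bool) =>
        if f p.1 = true then p else (bvxor p.1 p.2, p.2))
    · intro p hp
      simp only [hSdef, Finset.mem_filter, Finset.mem_product, hHdef] at hp
      obtain ⟨⟨_, hp2⟩, hp3⟩ := hp
      have hp2' : f p.2 = true := by
        simpa [hFdef, ones] using hp2
      by_cases h : f p.1 = true
      · simp only [h, if_true]
        have hne : f (bvxor p.1 p.2) = false := by
          cases hb : f (bvxor p.1 p.2) with
          | false => rfl
          | true => exact absurd (hb.trans h.symm) hp3
        simp only [hBdef, Finset.mem_filter, Finset.mem_product]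
        refine ⟨⟨?_, hp2⟩, ?_⟩
        · simp [hFdef, ones, h]
        · exact hne
      · simp only [h, if_false]
        have hfa : f p.1 = false := by simpa using h
        have htrue : f (bvxor p.1 p.2) = true := by
          cases hb : f (bvxor p.1 p.2) with
          | true => rfl
          | false => exact absurd (hb.trans hfa.symm) hp3
        simp only [hBdef, Finset.mem_filter, Finset.mem_product]
        refine ⟨⟨?_, hp2⟩, ?_⟩
        · simp [hFdef, ones, htrue]
        · show f (bvxor (bvxor p.1 p.2) p.2) = false
          rw [bvxor_cancel]; exact hfa
    · intro b _
      have hsub : (S.filter (fun p =>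
          (if f p.1 = true then p else (bvxor p.1 p.2, p.2)) = b))
          ⊆ {(b.1, b.2), (bvxor b.1 b.2, b.2)} := by
        intro p hp
        simp only [Finset.mem_filter] at hp
        simp only [Finset.mem_insert, Finset.mem_singleton]
        by_cases h : f p.1 = true
        · left
          rw [if_pos h] at hp
          rw [hp.2]
        · right
          rw [if_neg h] at hp
          have hpe := hp.2
          rw [Prod.ext_iff] at hpe
          obtain ⟨h1, h2⟩ := hpe
          have : p.1 = bvxor b.1 b.2 := by
            rw [← h1, ← h2, bvxor_cancel]
          exact Prod.ext this h2
      calc _ ≤ ({(b.1, b.2), (bvxor b.1 b.2, b.2)} : Finset _).card :=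
            Finset.card_le_card hsub
        _ ≤ 2 := by
            apply le_trans (Finset.card_insert_le _ _)
            simp
  have hBcard : (B.card : ℝ) ≥ (δ * N) * (δ * N) / 2 := by
    have : (S.card : ℝ) ≤ 2 * (B.card : ℝ) := by exact_mod_cast hg
    linarith
  calc (B.card : ℝ) ≥ (δ * N) * (δ * N) / 2 := hBcard
    _ = δ ^ 2 / 2 * N ^ 2 := by ring
end

section
/- Let f : {0,1}^n → {0,1} with F = f⁻¹(1) nonempty, N = |F|, and let 0 < δ ≤ 1/8. Define W(a) := {x ∈ F : f(a ⊕ x) ≠ f(a)} and H := {a : |W(a)| > δN}, and assume |H| ≤ δN. Define g_f(a) = 1 iff Pr_{x ∼ Uniform(F)}[f(a ⊕ x) = 1] ≥ 1/2. Then for every a ∈ {0,1}^n, Pr_{x ∼ Uniform(F)}[g_f(a) = f(a ⊕ x)] ≥ 1 − 4δ. -/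
set_option maxHeartbeats 1000000

theorem amplification (n : ℕ) (f gf : (Fin n → Bool) → Bool) (δ : ℝ)
    (hδ0 : 0 < δ) (hδ : δ ≤ 1 / 8)
    (hf : (ones f).Nonempty)
    (hgf : ∀ a : Fin n → Bool, gf a = true ↔
      ((((ones f).filter (fun x => f (fun i => xor (a i) (x i)) = true)).card : ℝ) ≥
        ((ones f).card : ℝ) / 2))
    (hH : ((Finset.univ.filter (fun a : Fin n → Bool =>
        (((ones f).filter (fun x => f (fun i => xor (a i) (x i)) ≠ f a)).card : ℝ) >
          δ * ((ones f).card : ℝ))).card : ℝ) ≤ δ * ((ones f).card : ℝ)) :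
    ∀ a : Fin n → Bool,
      (((ones f).filter (fun x => gf a = f (fun i => xor (a i) (x i)))).card : ℝ) ≥
        (1 - 4 * δ) * ((ones f).card : ℝ) := by
  classical
  intro a
  set F : Finset (Fin n → Bool) := ones f with hFdef
  have hNpos : (0:ℝ) < (F.card : ℝ) := by exact_mod_cast Finset.card_pos.mpr hf
  set N : ℝ := (F.card : ℝ) with hNdef
  set HS : Finset (Fin n → Bool) := Finset.univ.filter (fun a : Fin n → Bool =>
      ((F.filter (fun x => f (fun i => xor (a i) (x i)) ≠ f a)).card : ℝ) > δ * N) with hHS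
  -- injectivity of x ↦ a ⊕ x
  have hinj : Function.Injective (fun x : Fin n → Bool => (fun i => xor (a i) (x i))) := by
    intro x y h
    funext i
    have h' := congrFun h i
    revert h'
    cases a i <;> simp
  -- commutation
  have hxc : ∀ x y : Fin n → Bool,
      (fun i => xor (xor (a i) (x i)) (y i)) = (fun i => xor (xor (a i) (y i)) (x i)) := by
    intro x y; funext i; cases a i <;> cases x i <;> cases y i <;> rfl
  set s : ℕ := (F.filter (fun x => f (fun i => xor (a i) (x i)) = true)).card with hs
  set t : ℕ := (F.filter (fun x => f (fun i => xor (a i) (x i)) = false)).card with ht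
  have hst : (s : ℝ) + t = N := by
    have h := Finset.card_filter_add_card_filter_not
      (s := F) (p := fun x => f (fun i => xor (a i) (x i)) = true)
    have h2 : F.filter (fun x => ¬ (f (fun i => xor (a i) (x i)) = true)) =
        F.filter (fun x => f (fun i => xor (a i) (x i)) = false) := by
      apply Finset.filter_congr; intro x _; simp
    rw [h2] at h
    have h3 : s + t = F.card := by rw [hs, ht]; exact h
    rw [hNdef]
    exact_mod_cast h3
  set P := F ×ˢ F with hP
  set A := P.filter (fun p => ¬ (f (fun i => xor (xor (a i) (p.1 i)) (p.2 i)) =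
    f (fun i => xor (a i) (p.1 i)))) with hA
  set A' := P.filter (fun p => ¬ (f (fun i => xor (xor (a i) (p.1 i)) (p.2 i)) =
    f (fun i => xor (a i) (p.2 i)))) with hA'
  set Bad := P.filter (fun p => ¬ (f (fun i => xor (a i) (p.1 i)) =
    f (fun i => xor (a i) (p.2 i)))) with hB
  -- Bad card
  have hBadcard : Bad.card = s * t + t * s := by
    have h1 : Bad = P.filter (fun p => (f (fun i => xor (a i) (p.1 i)) = true ∧
        f (fun i => xor (a i) (p.2 i)) = false) ∨ (f (fun i => xor (a i) (p.1 i)) = false ∧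
        f (fun i => xor (a i) (p.2 i)) = true)) := by
      apply Finset.filter_congr
      intro p _
      cases hb : f (fun i => xor (a i) (p.1 i)) <;>
        cases hc : f (fun i => xor (a i) (p.2 i)) <;> simp
    have e1 : P.filter (fun p => f (fun i => xor (a i) (p.1 i)) = true ∧
        f (fun i => xor (a i) (p.2 i)) = false) =
        (F.filter (fun x => f (fun i => xor (a i) (x i)) = true)) ×ˢ
        (F.filter (fun x => f (fun i => xor (a i) (x i)) = false)) := by
      rw [hP]; ext p
      simp only [Finset.mem_filter, Finset.mem_product]
      tauto
    have e2 : P.filter (fun p => f (fun i => xor (a i) (p.1 i)) = false ∧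
        f (fun i => xor (a i) (p.2 i)) = true) =
        (F.filter (fun x => f (fun i => xor (a i) (x i)) = false)) ×ˢ
        (F.filter (fun x => f (fun i => xor (a i) (x i)) = true)) := by
      rw [hP]; ext p
      simp only [Finset.mem_filter, Finset.mem_product]
      tauto
    rw [h1, Finset.filter_or, Finset.card_union_of_disjoint, e1, e2,
      Finset.card_product, Finset.card_product, hs, ht]
    rw [e1, e2]
    rw [Finset.disjoint_left]
    intro p hp1 hp2
    simp only [Finset.mem_product, Finset.mem_filter] at hp1 hp2
    rw [hp1.1.2] at hp2
    exact absurd hp2.1.2 (by decide)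
  -- Bad ⊆ A ∪ A'
  have hsub : Bad ⊆ A ∪ A' := by
    intro p hp
    rw [Finset.mem_union]
    rw [hB, Finset.mem_filter] at hp
    obtain ⟨hpP, hne⟩ := hp
    by_cases h1 : f (fun i => xor (xor (a i) (p.1 i)) (p.2 i)) = f (fun i => xor (a i) (p.1 i))
    · right
      rw [hA', Finset.mem_filter]
      exact ⟨hpP, fun h2 => hne (h1.symm.trans h2)⟩
    · left
      rw [hA, Finset.mem_filter]
      exact ⟨hpP, h1⟩
  -- |A'| = |A|
  have hswap : A'.card = A.card := by
    refine Finset.card_bij' (fun p _ => p.swap) (fun p _ => p.swap) ?_ ?_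
      (fun p _ => rfl) (fun p _ => rfl)
    · intro p hp
      rw [hA', Finset.mem_filter] at hp
      rw [hA, Finset.mem_filter]
      obtain ⟨hpP, hne⟩ := hp
      rw [hP, Finset.mem_product] at hpP
      constructor
      · rw [hP, Finset.mem_product]; exact ⟨hpP.2, hpP.1⟩
      · show ¬(f fun i => xor (xor (a i) (p.swap.1 i)) (p.swap.2 i)) =
            f fun i => xor (a i) (p.swap.1 i)
        simp only [Prod.fst_swap, Prod.snd_swap]
        rw [hxc p.2 p.1]
        exact hne
    · intro p hp
      rw [hA, Finset.mem_filter] at hp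
      rw [hA', Finset.mem_filter]
      obtain ⟨hpP, hne⟩ := hp
      rw [hP, Finset.mem_product] at hpP
      constructor
      · rw [hP, Finset.mem_product]; exact ⟨hpP.2, hpP.1⟩
      · show ¬(f fun i => xor (xor (a i) (p.swap.1 i)) (p.swap.2 i)) =
            f fun i => xor (a i) (p.swap.2 i)
        simp only [Prod.fst_swap, Prod.snd_swap]
        rw [hxc p.2 p.1]
        exact hne
  -- fiberwise sum for A
  have hAsum : A.card = ∑ x ∈ F, (F.filter (fun y =>
      ¬ (f (fun i => xor (xor (a i) (x i)) (y i)) = f (fun i => xor (a i) (x i))))).card := by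
    rw [hA, hP, Finset.card_filter, Finset.sum_product]
    exact Finset.sum_congr rfl fun x _ => (Finset.card_filter _ _).symm
  -- per-fiber bound for good x
  have hgood : ∀ x : Fin n → Bool, (fun i => xor (a i) (x i)) ∉ HS →
      ((F.filter (fun y => ¬ (f (fun i => xor (xor (a i) (x i)) (y i)) =
        f (fun i => xor (a i) (x i))))).card : ℝ) ≤ δ * N := by
    intro x hx
    rw [hHS, Finset.mem_filter] at hx
    push_neg at hx
    have h := hx (Finset.mem_univ _)
    beta_reduce at h
    exact h
  -- bound on A
  have hAbound : (A.card : ℝ) ≤ 2 * δ * N ^ 2 := by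
    set F1 := F.filter (fun x => (fun i => xor (a i) (x i)) ∈ HS) with hF1
    set F2 := F.filter (fun x => ¬ ((fun i => xor (a i) (x i)) ∈ HS)) with hF2
    have hF1card : (F1.card : ℝ) ≤ δ * N := by
      refine le_trans ?_ hH
      have : F1.card ≤ HS.card := by
        apply Finset.card_le_card_of_injOn (fun x => (fun i => xor (a i) (x i)))
        · intro x hx
          rw [hF1, Finset.mem_coe, Finset.mem_filter] at hx
          exact Finset.mem_coe.mpr hx.2
        · exact fun x _ y _ h => hinj h
      exact_mod_cast this
    have hsplit : (A.card : ℝ) = (∑ x ∈ F1, ((F.filter (fun y =>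
        ¬ (f (fun i => xor (xor (a i) (x i)) (y i)) =
          f (fun i => xor (a i) (x i))))).card : ℝ)) +
        ∑ x ∈ F2, ((F.filter (fun y => ¬ (f (fun i => xor (xor (a i) (x i)) (y i)) =
          f (fun i => xor (a i) (x i))))).card : ℝ) := by
      rw [hAsum]
      push_cast
      rw [hF1, hF2, Finset.sum_filter_add_sum_filter_not]
    have hb1 : (∑ x ∈ F1, ((F.filter (fun y =>
        ¬ (f (fun i => xor (xor (a i) (x i)) (y i)) =
          f (fun i => xor (a i) (x i))))).card : ℝ)) ≤ (δ * N) * N := by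
      have h1 : ∀ x ∈ F1, ((F.filter (fun y =>
          ¬ (f (fun i => xor (xor (a i) (x i)) (y i)) =
            f (fun i => xor (a i) (x i))))).card : ℝ) ≤ N := by
        intro x _
        rw [hNdef]
        exact_mod_cast Finset.card_filter_le _ _
      calc _ ≤ ∑ _x ∈ F1, N := Finset.sum_le_sum h1
        _ = F1.card * N := by rw [Finset.sum_const, nsmul_eq_mul]
        _ ≤ (δ * N) * N := mul_le_mul_of_nonneg_right hF1card (le_of_lt hNpos)
    have hb2 : (∑ x ∈ F2, ((F.filter (fun y =>
        ¬ (f (fun i => xor (xor (a i) (x i)) (y i)) =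
          f (fun i => xor (a i) (x i))))).card : ℝ)) ≤ N * (δ * N) := by
      have h1 : ∀ x ∈ F2, ((F.filter (fun y =>
          ¬ (f (fun i => xor (xor (a i) (x i)) (y i)) =
            f (fun i => xor (a i) (x i))))).card : ℝ) ≤ δ * N := by
        intro x hx
        rw [hF2, Finset.mem_filter] at hx
        exact hgood x hx.2
      calc _ ≤ ∑ _x ∈ F2, (δ * N) := Finset.sum_le_sum h1
        _ = F2.card * (δ * N) := by rw [Finset.sum_const, nsmul_eq_mul]
        _ ≤ N * (δ * N) := by
            apply mul_le_mul_of_nonneg_right _ (by positivity)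
            rw [hNdef]
            exact_mod_cast Finset.card_filter_le _ _
    rw [hsplit]
    nlinarith [hb1, hb2]
  -- key product bound
  have hprod : (s : ℝ) * t ≤ 2 * δ * N ^ 2 := by
    have h2 : Bad.card ≤ A.card + A'.card :=
      le_trans (Finset.card_le_card hsub) (Finset.card_union_le _ _)
    have h3 : (Bad.card : ℝ) ≤ (A.card : ℝ) + (A'.card : ℝ) := by exact_mod_cast h2
    rw [hswap] at h3
    have h1 : (Bad.card : ℝ) ≤ 4 * δ * N ^ 2 := by linarith [hAbound]
    rw [hBadcard] at h1
    push_cast at h1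
    linarith
  -- case split on gf a
  cases hgfa : gf a with
  | true =>
    have hs2 : (s : ℝ) ≥ N / 2 := (hgf a).mp hgfa
    have hfil : F.filter (fun x => true = f (fun i => xor (a i) (x i))) =
        F.filter (fun x => f (fun i => xor (a i) (x i)) = true) := by
      apply Finset.filter_congr
      intro x _
      exact ⟨fun h => h.symm, fun h => h.symm⟩
    rw [hfil, ← hs]
    nlinarith [hst, hprod, hNpos, (Nat.cast_nonneg t : (0:ℝ) ≤ t), (Nat.cast_nonneg s : (0:ℝ) ≤ s)]
  | false =>
    have hs2 : (s : ℝ) < N / 2 := by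
      by_contra h
      push_neg at h
      have := (hgf a).mpr h
      rw [hgfa] at this
      exact Bool.false_ne_true this
    have hfil : F.filter (fun x => false = f (fun i => xor (a i) (x i))) =
        F.filter (fun x => f (fun i => xor (a i) (x i)) = false) := by
      apply Finset.filter_congr
      intro x _
      exact ⟨fun h => h.symm, fun h => h.symm⟩
    rw [hfil, ← ht]
    nlinarith [hst, hprod, hNpos, (Nat.cast_nonneg t : (0:ℝ) ≤ t), (Nat.cast_nonneg s : (0:ℝ) ≤ s)]
end

section
/- Let G ⊆ {0,1}^n be a linear subspace of F_2^n and define X := {x ∈ G : every y ≼ x belongs to G}. If G is not anti-monotone (equivalently, the indicator of G is not an anti-monotone conjunction), then |X| ≤ |G|/2. -/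
theorem X_at_most_half_of_G (n : ℕ) (G : Set (Fin n → Bool))
    (hzero : (fun _ => false) ∈ G)
    (hxor : ∀ x ∈ G, ∀ y ∈ G, (fun i => xor (x i) (y i)) ∈ G)
    (hnotanti : ¬ (∀ x ∈ G, ∀ y : Fin n → Bool, (∀ i, y i ≤ x i) → y ∈ G)) :
    (({x ∈ G | ∀ y : Fin n → Bool, (∀ i, y i ≤ x i) → y ∈ G}).ncard : ℝ) ≤
      (G.ncard : ℝ) / 2 := by
  set X := {x ∈ G | ∀ y : Fin n → Bool, (∀ i, y i ≤ x i) → y ∈ G} with hXdef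
  have hGfin : G.Finite := Set.toFinite G
  have hXsub : X ⊆ G := fun x hx => hx.1
  have hclosed : ∀ x ∈ X, ∀ y ∈ X, (fun i => xor (x i) (y i)) ∈ X := by
    rintro x ⟨hxG, hx⟩ y ⟨hyG, hy⟩
    refine ⟨hxor x hxG y hyG, ?_⟩
    intro z hz
    have ha : (fun i => z i && x i) ∈ G := hx _ (fun i => by cases z i <;> simp)
    have hb : (fun i => z i && !x i) ∈ G := by
      refine hy _ (fun i => ?_)
      have := hz i
      cases hzi : z i <;> cases hxi : x i <;> simp_all
    have hz' : z = fun i => xor (z i && x i) (z i && !x i) := by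
      funext i; cases z i <;> cases x i <;> rfl
    rw [hz']
    exact hxor _ ha _ hb
  push_neg at hnotanti
  obtain ⟨g, hgG, y, hy, hyG⟩ := hnotanti
  have hgX : g ∉ X := fun hg => hyG (hg.2 y hy)
  set f : (Fin n → Bool) → (Fin n → Bool) := fun x i => xor (x i) (g i) with hf
  have hmaps : ∀ x ∈ X, f x ∈ G \ X := by
    intro x hx
    refine ⟨hxor x hx.1 g hgG, fun hfx => ?_⟩
    have := hclosed x hx (f x) hfx
    have hgeq : (fun i => xor (x i) (f x i)) = g := by
      funext i; cases hxi : x i <;> cases hgi : g i <;> simp [hf, hxi, hgi]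
    rw [hgeq] at this
    exact hgX this
  have hinj : Set.InjOn f X := by
    intro a _ b _ hab
    funext i
    have := congrFun hab i
    simp only [hf] at this
    cases ha : a i <;> cases hb : b i <;> simp_all
  have h1 : X.ncard ≤ (G \ X).ncard :=
    Set.ncard_le_ncard_of_injOn f hmaps hinj (hGfin.subset Set.diff_subset)
  have h2 : (G \ X).ncard + X.ncard = G.ncard :=
    Set.ncard_diff_add_ncard_of_subset hXsub
  have : (X.ncard : ℝ) + X.ncard ≤ G.ncard := by
    have := h1
    push_cast [← h2]
    exact_mod_cast by linarith [h1]
  linarith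
end

section
/- Let f, g : {0,1}^n → {0,1} with F = f⁻¹(1) nonempty and N = |F|, G = g⁻¹(1). Suppose G is a linear subspace of F_2^n, g is not an anti-monotone conjunction, and |F △ G| ≤ N/10. Let X := {x ∈ G : every y ≼ x is in G}. Then |(G \ X) ∩ F| ≥ N/10. -/
theorem G_minus_X_cap_F_large (n : ℕ) (f g : (Fin n → Bool) → Bool)
    (hf : ({x : Fin n → Bool | f x = true}).Nonempty)
    (hzero : (fun _ => false) ∈ {x : Fin n → Bool | g x = true})
    (hxor : ∀ x ∈ {x : Fin n → Bool | g x = true}, ∀ y ∈ {x : Fin n → Bool | g x = true},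
      (fun i => xor (x i) (y i)) ∈ {x : Fin n → Bool | g x = true})
    (hnotconj : ¬ ∃ S : Finset (Fin n), ∀ x, g x = true ↔ ∀ i ∈ S, x i = false)
    (hclose : ((({x : Fin n → Bool | f x = true} \ {x : Fin n → Bool | g x = true}) ∪
        ({x : Fin n → Bool | g x = true} \ {x : Fin n → Bool | f x = true})).ncard : ℝ) ≤
      (({x : Fin n → Bool | f x = true}).ncard : ℝ) / 10) :
    (((({x : Fin n → Bool | g x = true} \
        {x ∈ {x : Fin n → Bool | g x = true} |
          ∀ y : Fin n → Bool, (∀ i, y i ≤ x i) → y ∈ {x : Fin n → Bool | g x = true}}) ∩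
        {x : Fin n → Bool | f x = true}).ncard : ℝ)) ≥
      (({x : Fin n → Bool | f x = true}).ncard : ℝ) / 10 := by
  classical
  set F : Set (Fin n → Bool) := {x | f x = true} with hF
  set G : Set (Fin n → Bool) := {x | g x = true} with hG
  set X : Set (Fin n → Bool) :=
    {x ∈ G | ∀ y : Fin n → Bool, (∀ i, y i ≤ x i) → y ∈ G} with hX
  -- X ⊆ G
  have hXG : X ⊆ G := fun x hx => hx.1
  -- X is closed under xor
  have hXxor : ∀ x ∈ X, ∀ y ∈ X, (fun i => xor (x i) (y i)) ∈ X := by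
    rintro x ⟨hxG, hxd⟩ y ⟨hyG, hyd⟩
    refine ⟨hxor x hxG y hyG, ?_⟩
    intro z hz
    have h1 : (fun i => z i && x i) ∈ G := hxd _ (fun i => by cases z i <;> cases x i <;> simp)
    have h2 : (fun i => z i && !(x i)) ∈ G := by
      refine hyd _ (fun i => ?_)
      have hzi : z i ≤ xor (x i) (y i) := hz i
      revert hzi
      cases x i <;> cases y i <;> cases z i <;> simp
    have := hxor _ h1 _ h2
    have hzeq : z = fun i => xor (z i && x i) (z i && !(x i)) := by
      funext i; cases z i <;> cases x i <;> simp
    rw [hzeq]; exact this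
  -- membership from support
  have key : ∀ k (x : Fin n → Bool),
      (Finset.univ.filter (fun i => x i = true)).card ≤ k →
      (∀ i, x i = true → (fun j => decide (j = i)) ∈ G) → x ∈ G := by
    intro k
    induction k with
    | zero =>
      intro x hc _
      have hx : ∀ i, x i = false := by
        intro i
        by_contra h
        have hi : i ∈ Finset.univ.filter (fun i => x i = true) := by
          simp [Bool.not_eq_false] at h ⊢; exact h
        have := Finset.card_pos.mpr ⟨i, hi⟩
        omega
      have : x = fun _ => false := funext hx
      rw [this]; exact hzero
    | succ k ih =>
      intro x hc hsup
      by_cases hx : ∀ i, x i = false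
      · have : x = fun _ => false := funext hx
        rw [this]; exact hzero
      · push_neg at hx
        obtain ⟨i, hi⟩ := hx
        have hxi : x i = true := by
          cases h : x i
          · exact absurd h hi
          · rfl
        set x' : Fin n → Bool := fun j => xor (x j) (decide (j = i)) with hx'
        have hx'sup : ∀ j, x' j = true → x j = true ∧ j ≠ i := by
          intro j hj
          by_cases hji : j = i
          · subst hji; simp [hx', hxi] at hj
          · constructor
            · simpa [hx', hji] using hj
            · exact hji
        have hsubset : Finset.univ.filter (fun j => x' j = true) ⊆
            (Finset.univ.filter (fun j => x j = true)).erase i := by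
          intro j hj
          simp only [Finset.mem_filter, Finset.mem_univ, true_and] at hj
          obtain ⟨h1, h2⟩ := hx'sup j hj
          simp [Finset.mem_erase, h1, h2]
        have hcard : (Finset.univ.filter (fun j => x' j = true)).card ≤ k := by
          have h1 := Finset.card_le_card hsubset
          have hi' : i ∈ Finset.univ.filter (fun j => x j = true) := by simp [hxi]
          have h2 := Finset.card_erase_of_mem hi'
          omega
        have hx'G : x' ∈ G := ih x' hcard (fun j hj => hsup j (hx'sup j hj).1)
        have heiG : (fun j => decide (j = i)) ∈ G := hsup i hxi
        have := hxor x' hx'G _ heiG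
        have hxeq : x = fun j => xor (x' j) (decide (j = i)) := by
          funext j; simp [hx', Bool.xor_assoc]
        rw [hxeq]; exact this
  -- there is z ∈ G \ X
  have hzX : ∃ z, z ∈ G \ X := by
    by_contra h
    push_neg at h
    have hGX : G ⊆ X := by
      intro z hz
      by_contra hzx
      exact h z ⟨hz, hzx⟩
    apply hnotconj
    refine ⟨Finset.univ.filter (fun i => (fun j => decide (j = i)) ∉ G), fun x => ?_⟩
    constructor
    · intro hxG i hiS
      simp only [Finset.mem_filter, Finset.mem_univ, true_and] at hiS
      by_contra h'
      have hxi : x i = true := by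
        cases h : x i
        · exact absurd h h'
        · rfl
      have hxX : x ∈ X := hGX hxG
      exact hiS (hxX.2 _ (fun j => by
        by_cases hji : j = i
        · subst hji; simp [hxi]
        · simp [hji]))
    · intro hS
      have hsup : ∀ i, x i = true → (fun j => decide (j = i)) ∈ G := by
        intro i hxi
        by_contra h'
        have : i ∈ Finset.univ.filter (fun i => (fun j => decide (j = i)) ∉ G) := by
          simp only [Finset.mem_filter, Finset.mem_univ, true_and]; exact h'
        have := hS i this
        rw [hxi] at this; exact Bool.noConfusion this
      exact key _ x le_rfl hsup
  obtain ⟨z, hzG, hzX'⟩ := hzX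
  -- |X| ≤ |G \ X|
  have hfinG : G.Finite := Set.toFinite G
  have hfinF : F.Finite := Set.toFinite F
  have hinj : X.ncard ≤ (G \ X).ncard := by
    apply Set.ncard_le_ncard_of_injOn (fun x => fun i => xor (x i) (z i))
    · intro x hx
      refine ⟨hxor x (hXG hx) z hzG, ?_⟩
      intro hmem
      apply hzX'
      have := hXxor x hx _ hmem
      have hzeq : z = fun i => xor (x i) (xor (x i) (z i)) := by
        funext i; cases x i <;> cases z i <;> simp
      rw [hzeq]; exact this
    · intro a _ b _ hab
      funext i
      have h' : xor (a i) (z i) = xor (b i) (z i) := congrFun hab i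
      have h'' := congrArg (fun b => xor b (z i)) h'
      simpa [Bool.xor_assoc] using h''
  -- counting
  have h1 : (G \ X).ncard + X.ncard = G.ncard :=
    Set.ncard_diff_add_ncard_of_subset hXG hfinG
  have h2 : (G \ F).ncard ≤ ((F \ G) ∪ (G \ F)).ncard :=
    Set.ncard_le_ncard Set.subset_union_right (Set.toFinite _)
  have h3 : (F \ G).ncard ≤ ((F \ G) ∪ (G \ F)).ncard :=
    Set.ncard_le_ncard Set.subset_union_left (Set.toFinite _)
  have h4 : (G \ X).ncard ≤ ((G \ X) ∩ F).ncard + (G \ F).ncard := by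
    have hsub : G \ X ⊆ ((G \ X) ∩ F) ∪ (G \ F) := by
      intro x hx
      by_cases hxF : x ∈ F
      · exact Or.inl ⟨hx, hxF⟩
      · exact Or.inr ⟨hx.1, hxF⟩
    calc (G \ X).ncard ≤ (((G \ X) ∩ F) ∪ (G \ F)).ncard :=
          Set.ncard_le_ncard hsub (Set.toFinite _)
      _ ≤ ((G \ X) ∩ F).ncard + (G \ F).ncard := Set.ncard_union_le _ _
  have h5 : F.ncard ≤ G.ncard + (F \ G).ncard := by
    have hsub : F ⊆ G ∪ (F \ G) := by
      intro x hx
      by_cases hxG : x ∈ G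
      · exact Or.inl hxG
      · exact Or.inr ⟨hx, hxG⟩
    calc F.ncard ≤ (G ∪ (F \ G)).ncard := Set.ncard_le_ncard hsub (Set.toFinite _)
      _ ≤ G.ncard + (F \ G).ncard := Set.ncard_union_le _ _
  have hN0 : (0 : ℝ) ≤ (F.ncard : ℝ) := Nat.cast_nonneg _
  have h1' : ((G \ X).ncard : ℝ) + (X.ncard : ℝ) = (G.ncard : ℝ) := by exact_mod_cast h1
  have hinj' : (X.ncard : ℝ) ≤ ((G \ X).ncard : ℝ) := by exact_mod_cast hinj
  have h2' : ((G \ F).ncard : ℝ) ≤ (((F \ G) ∪ (G \ F)).ncard : ℝ) := by exact_mod_cast h2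
  have h3' : ((F \ G).ncard : ℝ) ≤ (((F \ G) ∪ (G \ F)).ncard : ℝ) := by exact_mod_cast h3
  have h4' : ((G \ X).ncard : ℝ) ≤ (((G \ X) ∩ F).ncard : ℝ) + ((G \ F).ncard : ℝ) := by
    exact_mod_cast h4
  have h5' : (F.ncard : ℝ) ≤ (G.ncard : ℝ) + ((F \ G).ncard : ℝ) := by exact_mod_cast h5
  linarith
end

section
/- Let f : {0,1}^n → {0,1} be a decision list represented by rules (x_{i_1}, b_1, v_1), ..., (x_{i_k}, b_k, v_k), v_default, where each variable appears at most once and p ∈ [k] is the smallest index with v_p = 1 (assumed to exist, with v_j = 0 for j < p). Then Pr_{z ∼ Uniform(f⁻¹(1))}[z_{i_p} = b_p] ≥ 1/2, and for every j with p < j ≤ k, Pr_{z ∼ Uniform(f⁻¹(1))}[z_{i_j} = 1] ∈ [1/4, 3/4]. -/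
/-- Evaluation of a decision list given by a list of rules `(i, b, v)` and a default value:
on input `x`, output `v` for the first rule with `x i = b`, and the default if none fires. -/
def evalDL {α : Type*} : List (α × Bool × Bool) → Bool → (α → Bool) → Bool
  | [], d, _ => d
  | (i, b, v) :: rest, d, x => if x i = b then v else evalDL rest d x

section Aux

variable {n : ℕ}

private def flipc (j : Fin n) (z : Fin n → Bool) : Fin n → Bool := Function.update z j (!(z j))

private lemma flipc_apply_ne (j i : Fin n) (z : Fin n → Bool) (h : i ≠ j) : flipc j z i = z i :=
  Function.update_of_ne h _ _

private lemma flipc_apply_self (j : Fin n) (z : Fin n → Bool) : flipc j z j = !(z j) :=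
  Function.update_self _ _ _

private lemma flipc_flipc (j : Fin n) (z : Fin n → Bool) : flipc j (flipc j z) = z := by
  funext i
  by_cases h : i = j
  · subst h; simp [flipc]
  · rw [flipc_apply_ne _ _ _ h, flipc_apply_ne _ _ _ h]

private lemma card_half (j : Fin n) (T : Finset (Fin n → Bool))
    (hT : ∀ z ∈ T, flipc j z ∈ T) (b : Bool) :
    2 * (T.filter (fun z => z j = b)).card = T.card := by
  have h1 : (T.filter (fun z => z j = b)).card = (T.filter (fun z => ¬ z j = b)).card := by
    apply Finset.card_bij (fun z _ => flipc j z)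
    · intro a ha
      simp only [Finset.mem_filter] at ha ⊢
      refine ⟨hT a ha.1, ?_⟩
      rw [flipc_apply_self, ha.2]
      simp
    · intro a _ c _ hac
      have := congrArg (flipc j) hac
      rwa [flipc_flipc, flipc_flipc] at this
    · intro c hc
      simp only [Finset.mem_filter] at hc
      refine ⟨flipc j c, ?_, flipc_flipc j c⟩
      simp only [Finset.mem_filter]
      refine ⟨hT c hc.1, ?_⟩
      rw [flipc_apply_self]
      revert hc
      cases c j <;> cases b <;> simp
  have h2 : (T.filter (fun z => z j = b)).card + (T.filter (fun z => ¬ z j = b)).card = T.card := by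
    simpa using Finset.card_filter_add_card_filter_not (s := T) (p := fun z => z j = b)
  rw [← h2, h1, two_mul]

private lemma evalDL_append_of {α : Type*} (pre l : List (α × Bool × Bool)) (d : Bool)
    (x : α → Bool) (h : ∀ r ∈ pre, ¬ x r.1 = r.2.1) :
    evalDL (pre ++ l) d x = evalDL l d x := by
  induction pre with
  | nil => rfl
  | cons a t ih =>
    obtain ⟨i, b, v⟩ := a
    simp only [List.cons_append, evalDL]
    rw [if_neg (h (i, b, v) (by simp))]
    exact ih (fun r hr => h r (by simp [hr]))

private lemma evalDL_true_pre {α : Type*} (pre l : List (α × Bool × Bool)) (d : Bool)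
    (x : α → Bool) (hpre : ∀ r ∈ pre, r.2.2 = false)
    (h : evalDL (pre ++ l) d x = true) : ∀ r ∈ pre, ¬ x r.1 = r.2.1 := by
  induction pre with
  | nil => simp
  | cons a t ih =>
    intro r hr
    obtain ⟨i, b, v⟩ := a
    simp only [List.cons_append, evalDL] at h
    by_cases hx : x i = b
    · rw [if_pos hx] at h
      have := hpre (i, b, v) (by simp)
      simp only at this
      rw [this] at h
      exact absurd h (by simp)
    · rw [if_neg hx] at h
      rcases List.mem_cons.mp hr with rfl | hr'
      · exact hx
      · exact ih (fun s hs => hpre s (by simp [hs])) h r hr'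

end Aux

theorem low_bias_tail (n : ℕ) (pre post : List (Fin n × Bool × Bool))
    (ip : Fin n) (bp : Bool) (vdef : Bool)
    (hnodup : ((pre ++ (ip, bp, true) :: post).map Prod.fst).Nodup)
    (hpre : ∀ r ∈ pre, r.2.2 = false) :
    (((Finset.univ.filter (fun z : Fin n → Bool =>
          evalDL (pre ++ (ip, bp, true) :: post) vdef z = true)).filter
        (fun z => z ip = bp)).card : ℝ) ≥
      ((Finset.univ.filter (fun z : Fin n → Bool =>
          evalDL (pre ++ (ip, bp, true) :: post) vdef z = true)).card : ℝ) / 2 ∧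
    ∀ r ∈ post,
      ((Finset.univ.filter (fun z : Fin n → Bool =>
          evalDL (pre ++ (ip, bp, true) :: post) vdef z = true)).card : ℝ) / 4 ≤
        (((Finset.univ.filter (fun z : Fin n → Bool =>
            evalDL (pre ++ (ip, bp, true) :: post) vdef z = true)).filter
          (fun z => z r.1 = true)).card : ℝ) ∧
      (((Finset.univ.filter (fun z : Fin n → Bool =>
            evalDL (pre ++ (ip, bp, true) :: post) vdef z = true)).filter
          (fun z => z r.1 = true)).card : ℝ) ≤
        3 * ((Finset.univ.filter (fun z : Fin n → Bool =>
            evalDL (pre ++ (ip, bp, true) :: post) vdef z = true)).card : ℝ) / 4 := by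
  classical
  set L := pre ++ (ip, bp, true) :: post with hL
  set S : Finset (Fin n → Bool) :=
    Finset.univ.filter (fun z => evalDL L vdef z = true) with hS
  set B : Finset (Fin n → Bool) :=
    Finset.univ.filter (fun z => ∀ r ∈ pre, ¬ z r.1 = r.2.1) with hB
  set A : Finset (Fin n → Bool) := B.filter (fun z => z ip = bp) with hA
  -- nodup facts
  rw [List.map_append, List.map_cons, List.nodup_append] at hnodup
  obtain ⟨hnpre, hncons, hdisj⟩ := hnodup
  rw [List.nodup_cons] at hncons
  have hpre_ip : ∀ s ∈ pre, s.1 ≠ ip := fun s hs =>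
    fun h => hdisj s.1 (List.mem_map_of_mem (f := Prod.fst) hs) ip (by simp) h
  have hpre_post : ∀ s ∈ pre, ∀ r ∈ post, s.1 ≠ r.1 := fun s hs r hr =>
    fun h => hdisj s.1 (List.mem_map_of_mem (f := Prod.fst) hs)
      r.1 (by simp [List.mem_map_of_mem (f := Prod.fst) hr]) h
  have hip_post : ∀ r ∈ post, r.1 ≠ ip := fun r hr h =>
    hncons.1 (List.mem_map.mpr ⟨r, hr, h⟩)
  -- inclusions
  have hAS : A ⊆ S := by
    intro z hz
    simp only [hA, hB, Finset.mem_filter, Finset.mem_univ, true_and] at hz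
    simp only [hS, Finset.mem_filter, Finset.mem_univ, true_and]
    rw [hL, evalDL_append_of _ _ _ _ hz.1]
    simp [evalDL, hz.2]
  have hSB : S ⊆ B := by
    intro z hz
    simp only [hS, Finset.mem_filter, Finset.mem_univ, true_and] at hz
    simp only [hB, Finset.mem_filter, Finset.mem_univ, true_and]
    exact evalDL_true_pre _ _ _ _ hpre hz
  -- B closed under flip at ip
  have hBflip : ∀ z ∈ B, flipc ip z ∈ B := by
    intro z hz
    simp only [hB, Finset.mem_filter, Finset.mem_univ, true_and] at hz ⊢
    intro r hr
    rw [flipc_apply_ne _ _ _ (hpre_ip r hr)]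
    exact hz r hr
  have hAB : 2 * A.card = B.card := card_half ip B hBflip bp
  have hSle : S.card ≤ B.card := Finset.card_le_card hSB
  have hAsubfilter : A ⊆ S.filter (fun z => z ip = bp) := by
    intro z hz
    have hz' := hz
    simp only [hA, Finset.mem_filter] at hz'
    exact Finset.mem_filter.mpr ⟨hAS hz, hz'.2⟩
  have h1 : A.card ≤ (S.filter (fun z => z ip = bp)).card := Finset.card_le_card hAsubfilter
  constructor
  · have := h1
    have hc : (A.card : ℝ) ≤ ((S.filter (fun z => z ip = bp)).card : ℝ) := by exact_mod_cast h1
    have hc2 : 2 * (A.card : ℝ) = (B.card : ℝ) := by exact_mod_cast hAB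
    have hc3 : (S.card : ℝ) ≤ (B.card : ℝ) := by exact_mod_cast hSle
    rw [ge_iff_le, div_le_iff₀ (by norm_num : (0:ℝ) < 2)]
    linarith
  · intro r hr
    set j := r.1 with hj
    -- A closed under flip at j
    have hAflip : ∀ z ∈ A, flipc j z ∈ A := by
      intro z hz
      simp only [hA, hB, Finset.mem_filter, Finset.mem_univ, true_and] at hz ⊢
      refine ⟨fun s hs => ?_, ?_⟩
      · rw [flipc_apply_ne _ _ _ (hpre_post s hs r hr)]
        exact hz.1 s hs
      · rw [flipc_apply_ne _ _ _ (Ne.symm (hip_post r hr))]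
        exact hz.2
    have hAt : 2 * (A.filter (fun z => z j = true)).card = A.card :=
      card_half j A hAflip true
    have hAf : 2 * (A.filter (fun z => z j = false)).card = A.card :=
      card_half j A hAflip false
    have hsub_t : A.filter (fun z => z j = true) ⊆ S.filter (fun z => z j = true) :=
      Finset.filter_subset_filter _ hAS
    have hsub_f' : A.filter (fun z => z j = false) ⊆ S.filter (fun z => ¬ z j = true) := by
      intro z hz
      simp only [Finset.mem_filter] at hz ⊢
      refine ⟨hAS hz.1, by simp [hz.2]⟩
    have hsplit : (S.filter (fun z => z j = true)).card +
        (S.filter (fun z => ¬ z j = true)).card = S.card := by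
      simpa using Finset.card_filter_add_card_filter_not (s := S)
        (p := fun z => z j = true)
    have c1 : (A.filter (fun z => z j = true)).card ≤ (S.filter (fun z => z j = true)).card :=
      Finset.card_le_card hsub_t
    have c2 : (A.filter (fun z => z j = false)).card ≤
        (S.filter (fun z => ¬ z j = true)).card := Finset.card_le_card hsub_f'
    -- cast everything
    have r1 : 2 * ((A.filter (fun z => z j = true)).card : ℝ) = (A.card : ℝ) := by
      exact_mod_cast hAt
    have r2 : 2 * ((A.filter (fun z => z j = false)).card : ℝ) = (A.card : ℝ) := by
      exact_mod_cast hAf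
    have r3 : ((A.filter (fun z => z j = true)).card : ℝ) ≤
        ((S.filter (fun z => z j = true)).card : ℝ) := by exact_mod_cast c1
    have r4 : ((A.filter (fun z => z j = false)).card : ℝ) ≤
        ((S.filter (fun z => ¬ z j = true)).card : ℝ) := by exact_mod_cast c2
    have r5 : ((S.filter (fun z => z j = true)).card : ℝ) +
        ((S.filter (fun z => ¬ z j = true)).card : ℝ) = (S.card : ℝ) := by
      exact_mod_cast hsplit
    have r6 : 2 * (A.card : ℝ) = (B.card : ℝ) := by exact_mod_cast hAB
    have r7 : (S.card : ℝ) ≤ (B.card : ℝ) := by exact_mod_cast hSle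
    constructor
    · rw [div_le_iff₀ (by norm_num : (0:ℝ) < 4)]
      linarith
    · rw [le_div_iff₀ (by norm_num : (0:ℝ) < 4)]
      linarith
end
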